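/- Let n ≥ 1 and N = n(n+1)/2, and let {Q̂_α}_{α=1}^N be any orthonormal basis of SM(n). Then for any index α ∈ {1,...,N}, Σ_{β=1}^N ‖[Q̂_α, Q̂_β]‖² ≤ n. -/

import Mathlib

open Matrix BigOperators

/-- The squared Frobenius norm: sum of squares of the entries. -/
noncomputable def frobSq {n : ℕ} (A : Matrix (Fin n) (Fin n) ℝ) : ℝ :=
  ∑ i, ∑ j, (A i j) ^ 2

/-- The commutator of two matrices. -/
def mcomm {n : ℕ} (A B : Matrix (Fin n) (Fin n) ℝ) : Matrix (Fin n) (Fin n) ℝ :=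
  A * B - B * A

/-!
For fixed `A`, the entry `[A, B]_rs` is the entrywise inner product of `B` with
`commDual A r s = Aᵀ E_rs - E_rs Aᵀ`, and for symmetric `B` also with its symmetric part `X_rs`.
Bessel's inequality for the orthonormal family `Q_β` gives `∑_β [A, Q_β]_rs² ≤ ‖X_rs‖²`, and an
explicit computation gives `∑_rs ‖X_rs‖² = (n + 1)‖A‖² - tr(A²) - (tr A)²` for symmetric `A`,
which is `n - (tr A)² ≤ n` when `‖A‖ = 1`. Symmetrizing is what halves the trivial bound `2n`.
-/

namespace Matrix

section Flatten

variable {m n : Type*} [Fintype m] [Fintype n]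

def flatten (A : Matrix m n ℝ) : EuclideanSpace ℝ (m × n) :=
  WithLp.toLp 2 fun p => A p.1 p.2

theorem inner_flatten (A B : Matrix m n ℝ) :
    inner ℝ (flatten A) (flatten B) = ∑ i, ∑ j, A i j * B i j := by
  simp [flatten, PiLp.inner_apply, Fintype.sum_prod_type, mul_comm]

theorem norm_flatten_sq (A : Matrix m n ℝ) : ‖flatten A‖ ^ 2 = ∑ i, ∑ j, A i j ^ 2 := by
  rw [← real_inner_self_eq_norm_sq, inner_flatten]
  simp only [sq]

end Flatten

section SymmetricPart

variable {n : Type*} [Fintype n]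

theorem sum_mul_symmetrize {B : Matrix n n ℝ} (hB : B.IsSymm) (M : Matrix n n ℝ) :
    ∑ i, ∑ j, B i j * ((1 / 2 : ℝ) • (M + Mᵀ)) i j = ∑ i, ∑ j, B i j * M i j := by
  have hBt : ∑ i, ∑ j, B i j * M j i = ∑ i, ∑ j, B i j * M i j := by
    rw [Finset.sum_comm]
    simp_rw [hB.apply]
  simp only [smul_apply, add_apply, transpose_apply, smul_eq_mul, mul_add, Finset.sum_add_distrib,
    hBt, mul_left_comm _ (1 / 2 : ℝ), ← Finset.mul_sum]
  ring

theorem sum_symmetrize_sq (M : Matrix n n ℝ) :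
    ∑ i, ∑ j, ((1 / 2 : ℝ) • (M + Mᵀ)) i j ^ 2
      = (∑ i, ∑ j, M i j ^ 2 + ∑ i, ∑ j, M i j * M j i) / 2 := by
  have hMt : ∑ i, ∑ j, M j i ^ 2 = ∑ i, ∑ j, M i j ^ 2 := Finset.sum_comm
  have expand : ∀ i j, ((1 / 2 : ℝ) • (M + Mᵀ)) i j ^ 2
      = (M i j ^ 2 + M j i ^ 2 + 2 * (M i j * M j i)) / 4 := by
    intro i j
    simp only [smul_apply, add_apply, transpose_apply, smul_eq_mul]
    ring
  simp only [expand, ← Finset.sum_div, Finset.sum_add_distrib, ← Finset.mul_sum, hMt]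
  ring

end SymmetricPart

section CommutatorDual

variable {n : Type*} [Fintype n] [DecidableEq n]

def commDual (A : Matrix n n ℝ) (r s : n) : Matrix n n ℝ :=
  of fun i j => A r i * (if j = s then 1 else 0) - (if i = r then 1 else 0) * A j s

theorem sum_mul_commDual (A B : Matrix n n ℝ) (r s : n) :
    ∑ i, ∑ j, B i j * commDual A r s i j = (A * B - B * A) r s := by
  simp [commDual, mul_sub, Finset.sum_sub_distrib, mul_apply, mul_comm]

theorem sum_commDual_sq (A : Matrix n n ℝ) :
    ∑ r, ∑ s, ∑ i, ∑ j, commDual A r s i j ^ 2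
      = 2 * Fintype.card n * ∑ i, ∑ j, A i j ^ 2 - 2 * A.trace ^ 2 := by
  simp only [commDual, of_apply, mul_ite, ite_mul, mul_one, mul_zero, one_mul, zero_mul, sub_sq,
    ite_pow, ne_eq, OfNat.ofNat_ne_zero, not_false_eq_true, zero_pow, Finset.sum_add_distrib,
    Finset.sum_sub_distrib, Finset.sum_ite_eq', Finset.mem_univ, ↓reduceIte, Finset.sum_ite_irrel,
    Finset.sum_const_zero, Finset.sum_const, Finset.card_univ, nsmul_eq_mul, Finset.mul_sum, trace,
    diag_apply]
  rw [Finset.sum_comm (f := fun x i => _ * A i x ^ 2), sq (∑ i, A i i), Finset.sum_mul_sum]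
  simp only [Finset.mul_sum, ← Finset.sum_add_distrib, ← Finset.sum_sub_distrib]
  exact Finset.sum_congr rfl fun _ _ => Finset.sum_congr rfl fun _ _ => by ring

theorem sum_commDual_mul_transpose (A : Matrix n n ℝ) :
    ∑ r, ∑ s, ∑ i, ∑ j, commDual A r s i j * commDual A r s j i
      = 2 * ∑ i, ∑ j, A i j ^ 2 - 2 * ∑ i, ∑ j, A i j * A j i := by
  simp only [commDual, of_apply, mul_ite, ite_mul, mul_one, mul_zero, one_mul, zero_mul, mul_sub,
    sub_mul, Finset.sum_sub_distrib, Finset.sum_ite_irrel, Finset.sum_ite_eq', Finset.sum_ite_eq,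
    Finset.mem_univ, ↓reduceIte, Finset.sum_const_zero, Finset.mul_sum]
  rw [Finset.sum_comm (f := fun x y => A y x * A x y)]
  simp only [← Finset.sum_sub_distrib]
  exact Finset.sum_congr rfl fun _ _ => Finset.sum_congr rfl fun _ _ => by ring

theorem sum_sq_commutator_le {ι : Type*} [Fintype ι] (A : Matrix n n ℝ)
    {Q : ι → Matrix n n ℝ} (hQ : ∀ β, (Q β).IsSymm) (hQ_orth : Orthonormal ℝ (flatten ∘ Q)) :
    ∑ β, ∑ r, ∑ s, (A * Q β - Q β * A) r s ^ 2
      ≤ (Fintype.card n + 1) * ∑ i, ∑ j, A i j ^ 2 - ∑ i, ∑ j, A i j * A j i - A.trace ^ 2 := by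
  set X : n → n → EuclideanSpace ℝ (n × n) :=
    fun r s => flatten ((1 / 2 : ℝ) • (commDual A r s + (commDual A r s)ᵀ))
  have hX : ∀ β r s, inner ℝ (flatten (Q β)) (X r s) = (A * Q β - Q β * A) r s := by
    intro β r s
    rw [inner_flatten, sum_mul_symmetrize (hQ β), sum_mul_commDual]
  calc ∑ β, ∑ r, ∑ s, (A * Q β - Q β * A) r s ^ 2
      = ∑ r, ∑ s, ∑ β, inner ℝ (flatten (Q β)) (X r s) ^ 2 := by
        simp_rw [hX]
        rw [Finset.sum_comm]
        exact Finset.sum_congr rfl fun _ _ => Finset.sum_comm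
    _ ≤ ∑ r, ∑ s, ‖X r s‖ ^ 2 := by
        gcongr with r _ s _
        simpa [Real.norm_eq_abs, sq_abs] using hQ_orth.sum_inner_products_le (X r s) (s := .univ)
    _ = _ := by
        simp only [X, norm_flatten_sq, sum_symmetrize_sq, ← Finset.sum_div, Finset.sum_add_distrib,
          sum_commDual_sq, sum_commDual_mul_transpose]
        ring

end CommutatorDual

end Matrix

theorem commutator_sum_le_n (n N : ℕ)
    (Q : Fin N → Matrix (Fin n) (Fin n) ℝ) (hsymm : ∀ α, (Q α).IsSymm)
    (horth : ∀ α β, (∑ i, ∑ j, Q α i j * Q β i j) = if α = β then 1 else 0)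
    (α : Fin N) :
    ∑ β, frobSq (mcomm (Q α) (Q β)) ≤ (n : ℝ) := by
  have hQ_orth : Orthonormal ℝ (flatten ∘ Q) :=
    orthonormal_iff_ite.2 fun β γ => by simp [inner_flatten, horth]
  have hnorm : ∑ i, ∑ j, Q α i j ^ 2 = 1 := by simpa [sq] using horth α α
  have htrace_sq : ∑ i, ∑ j, Q α i j * Q α j i = 1 := by
    simpa [(hsymm α).apply] using horth α α
  calc ∑ β, frobSq (mcomm (Q α) (Q β))
      ≤ (n + 1) * ∑ i, ∑ j, Q α i j ^ 2 - ∑ i, ∑ j, Q α i j * Q α j i - (Q α).trace ^ 2 := by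
        simpa [frobSq, mcomm] using sum_sq_commutator_le (Q α) hsymm hQ_orth
    _ ≤ n := by
        rw [hnorm, htrace_sq]
        linarith [sq_nonneg (Q α).trace]
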